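/- For the fat hook λ = ((a_1+a_2)^{a_1}, a_1^{a_2}), the number of λ-plane trees on k+1 vertices (k ≥ 1) equals Σ_{j=0}^{k+1} (1/k) · binom(2k, k+1-j) · binom(k, j) · a_1^{k+1-j} · a_2^j. -/

import Mathlib

def cellMem (L : ℕ → ℕ) (i j : ℕ) : Prop := 1 ≤ i ∧ 1 ≤ j ∧ j ≤ L i

def IsPartitionOfLength (L : ℕ → ℕ) (l : ℕ) : Prop :=
  (∀ i j, 1 ≤ i → i ≤ j → L j ≤ L i) ∧ ∀ i, 1 ≤ i → (1 ≤ L i ↔ i ≤ l)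

def SelfConjugate (L : ℕ → ℕ) : Prop := ∀ i j, cellMem L i j ↔ cellMem L j i

inductive LTree where
  | node : ℕ → List LTree → LTree

namespace LTree

def label : LTree → ℕ
  | node a _ => a

def size : LTree → ℕ
  | node _ ts => 1 + (ts.attach.map (fun t => size t.1)).sum
decreasing_by
  have := List.sizeOf_lt_of_mem t.2
  simp only [node.sizeOf_spec]
  omega

def countLabel (i : ℕ) : LTree → ℕ
  | node a ts => (if a = i then 1 else 0) + (ts.attach.map (fun t => countLabel i t.1)).sum
decreasing_by
  have := List.sizeOf_lt_of_mem t.2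
  simp only [node.sizeOf_spec]
  omega

def Valid (P : ℕ → ℕ → Prop) : LTree → Prop
  | node a ts => ∀ t ∈ ts, P a t.label ∧ Valid P t
decreasing_by
  have := List.sizeOf_lt_of_mem ‹_ ∈ _›
  simp only [node.sizeOf_spec]
  omega

def LabelsLe (l : ℕ) : LTree → Prop
  | node a ts => (1 ≤ a ∧ a ≤ l) ∧ ∀ t ∈ ts, LabelsLe l t
decreasing_by
  have := List.sizeOf_lt_of_mem ‹_ ∈ _›
  simp only [node.sizeOf_spec]
  omega

end LTree

/-- A `λ`-plane tree: labels in `[1, l]` and every edge `{u, v}` satisfies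
`(c u, c v) ∈ λ`. -/
def IsLambdaPlaneTree (L : ℕ → ℕ) (l : ℕ) (t : LTree) : Prop :=
  LTree.LabelsLe l t ∧ LTree.Valid (fun u v => cellMem L u v) t

/-- An `r`-plane tree: labels in `[1, r]` and every edge `{u, v}` satisfies
`c u + c v ≤ r + 1`. -/
def IsRPlaneTree (r : ℕ) (t : LTree) : Prop :=
  LTree.LabelsLe r t ∧ LTree.Valid (fun u v => u + v ≤ r + 1) t

/-- `C_k^λ`: the number of `λ`-plane trees on `k + 1` vertices. -/
noncomputable def lambdaPlaneCount (L : ℕ → ℕ) (l k : ℕ) : ℕ :=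
  Nat.card {t : LTree // t.size = k + 1 ∧ IsLambdaPlaneTree L l t}

/-- The number of `r`-plane trees on `k + 1` vertices. -/
noncomputable def rPlaneCount (r k : ℕ) : ℕ :=
  Nat.card {t : LTree // t.size = k + 1 ∧ IsRPlaneTree r t}

/-!
Split the trees by whether the root label is small (`≤ a₁`) or big. A big label is adjacent
only to small ones, so if `F` counts small-root trees and `S₁ = 1 / (1 - F)` counts forests of
them, then `F = X S₁ (a₁ + a₂ F S₁)`, while all trees are counted by `F + a₂ X S₁`. An explicit
binomial formula for the coefficients of every `F ^ p * S₁ ^ q` (Lagrange inversion) is checked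
against the recurrences in `p`, `q` and the degree that these two functional equations impose.
-/

open PowerSeries Finset

namespace LTree

def forestSize (ts : List LTree) : ℕ := (ts.map size).sum

@[simp] theorem forestSize_cons (t : LTree) (ts : List LTree) :
    forestSize (t :: ts) = t.size + forestSize ts := by
  simp [forestSize]

@[simp] theorem label_node (a : ℕ) (ts : List LTree) : (node a ts).label = a := rfl

theorem size_node (a : ℕ) (ts : List LTree) : (node a ts).size = forestSize ts + 1 := by
  rw [size, forestSize, List.map_attach_eq_pmap, List.pmap_eq_map]
  omega

theorem size_ne_zero (t : LTree) : t.size ≠ 0 := by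
  cases t
  rw [size_node]
  omega

theorem labelsLe_node {l a : ℕ} {ts : List LTree} :
    LabelsLe l (node a ts) ↔ a ∈ Set.Icc 1 l ∧ ∀ t ∈ ts, LabelsLe l t := by
  rw [LabelsLe, Set.mem_Icc]

theorem valid_node {P : ℕ → ℕ → Prop} {a : ℕ} {ts : List LTree} :
    Valid P (node a ts) ↔ ∀ t ∈ ts, P a t.label ∧ Valid P t := by
  rw [Valid]

abbrev TreesOfSize (W : LTree → Prop) (n : ℕ) : Type := {t : LTree // t.size = n ∧ W t}

abbrev ForestsOfSize (W : LTree → Prop) (n : ℕ) : Type :=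
  {ts : List LTree // forestSize ts = n ∧ ∀ t ∈ ts, W t}

section Counting

variable {W R : LTree → Prop} {s : Set ℕ}

instance isEmpty_treesOfSize_zero (W : LTree → Prop) : IsEmpty (TreesOfSize W 0) :=
  ⟨fun t => t.1.size_ne_zero t.2.1⟩

def treesOfSizeSuccEquiv (hW : ∀ a ts, W (node a ts) ↔ a ∈ s ∧ ∀ t ∈ ts, R t) (n : ℕ) :
    TreesOfSize W (n + 1) ≃ s × ForestsOfSize R n where
  toFun
    | ⟨node a ts, h⟩ =>
      (⟨a, ((hW a ts).1 h.2).1⟩,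
        ⟨ts, by have := h.1; rw [size_node] at this; omega, ((hW a ts).1 h.2).2⟩)
  invFun p := ⟨node p.1 p.2.1, by rw [size_node, p.2.2.1], (hW _ _).2 ⟨p.1.2, p.2.2.2⟩⟩
  left_inv := by rintro ⟨⟨a, ts⟩, h⟩; rfl
  right_inv := by rintro ⟨⟨a, ha⟩, ⟨ts, hts⟩⟩; rfl

def forestsOfSizeEquiv (R : LTree → Prop) (n : ℕ) :
    ForestsOfSize R n ≃
      {_u : Unit // n = 0} ⊕ Σ p : antidiagonal n, TreesOfSize R p.1.1 × ForestsOfSize R p.1.2 where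
  toFun
    | ⟨[], h⟩ => .inl ⟨(), h.1.symm⟩
    | ⟨t :: ts, h⟩ =>
      .inr ⟨⟨(t.size, forestSize ts), by simpa using h.1⟩,
        ⟨t, rfl, h.2 t List.mem_cons_self⟩,
        ⟨ts, rfl, fun u hu => h.2 u (List.mem_cons_of_mem t hu)⟩⟩
  invFun
    | .inl ⟨_, hn⟩ => ⟨[], hn.symm, by simp⟩
    | .inr ⟨p, t, ts⟩ => ⟨t.1 :: ts.1, by
        rw [forestSize_cons, t.2.1, ts.2.1]; exact HasAntidiagonal.mem_antidiagonal.1 p.2, by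
        simpa using ⟨t.2.2, ts.2.2⟩⟩
  left_inv := by rintro ⟨_ | ⟨t, ts⟩, h⟩ <;> rfl
  right_inv := by
    rintro (⟨⟨⟩, h⟩ | ⟨⟨⟨i, j⟩, hij⟩, ⟨t, ht, hRt⟩, ⟨ts, hts, hRts⟩⟩)
    · rfl
    · dsimp only at ht hts
      subst ht hts
      rfl

theorem card_forestsOfSize [∀ n, Finite (TreesOfSize R n)] [∀ n, Finite (ForestsOfSize R n)]
    (n : ℕ) :
    Nat.card (ForestsOfSize R n) = (if n = 0 then 1 else 0) +
      ∑ p ∈ antidiagonal n, Nat.card (TreesOfSize R p.1) * Nat.card (ForestsOfSize R p.2) := by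
  rw [Nat.card_congr (forestsOfSizeEquiv R n), Nat.card_sum, Nat.card_sigma,
    ← sum_coe_sort (antidiagonal n)]
  congr 1
  · split_ifs with hn
    · subst hn; simp
    · simp [hn]
  · simp_rw [Nat.card_prod]

theorem finite_forestsOfSize (hW : ∀ a ts, W (node a ts) ↔ a ∈ s ∧ ∀ t ∈ ts, W t) [Finite s]
    (n : ℕ) : Finite (ForestsOfSize W n) := by
  induction n using Nat.strong_induction_on with
  | _ n ih =>
  have hpair : ∀ p : antidiagonal n, Finite (TreesOfSize W p.1.1 × ForestsOfSize W p.1.2) := by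
    rintro ⟨⟨_ | i, j⟩, hij⟩
    · infer_instance
    · rw [HasAntidiagonal.mem_antidiagonal] at hij
      have := ih i (by omega)
      have := ih j (by omega)
      exact Finite.of_equiv _ (Equiv.prodCongr (treesOfSizeSuccEquiv hW i).symm (.refl _))
  exact Finite.of_equiv _ (forestsOfSizeEquiv W n).symm

theorem finite_treesOfSize (hW : ∀ a ts, W (node a ts) ↔ a ∈ s ∧ ∀ t ∈ ts, W t) [Finite s] :
    ∀ n, Finite (TreesOfSize W n)
  | 0 => inferInstance
  | n + 1 =>
    have := finite_forestsOfSize hW n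
    Finite.of_equiv _ (treesOfSizeSuccEquiv hW n).symm

instance finite_treesOfSize_labelsLe (l n : ℕ) : Finite (TreesOfSize (LabelsLe l) n) :=
  finite_treesOfSize (fun _ _ => labelsLe_node) n

instance finite_forestsOfSize_labelsLe (l n : ℕ) : Finite (ForestsOfSize (LabelsLe l) n) :=
  finite_forestsOfSize (fun _ _ => labelsLe_node) n

theorem TreesOfSize.finite_of_imp {W' : LTree → Prop} (h : ∀ t, W t → W' t) (n : ℕ)
    [Finite (TreesOfSize W' n)] : Finite (TreesOfSize W n) :=
  Finite.of_injective (fun t => (⟨t.1, t.2.1, h _ t.2.2⟩ : TreesOfSize W' n))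
    fun _ _ e => Subtype.ext (Subtype.mk.inj e)

theorem ForestsOfSize.finite_of_imp {W' : LTree → Prop} (h : ∀ t, W t → W' t) (n : ℕ)
    [Finite (ForestsOfSize W' n)] : Finite (ForestsOfSize W n) :=
  Finite.of_injective
    (fun ts => (⟨ts.1, ts.2.1, fun t ht => h _ (ts.2.2 t ht)⟩ : ForestsOfSize W' n))
    fun _ _ e => Subtype.ext (Subtype.mk.inj e)

noncomputable def treeGF (W : LTree → Prop) : ℚ⟦X⟧ := mk fun n => (Nat.card (TreesOfSize W n) : ℚ)

noncomputable def forestGF (W : LTree → Prop) : ℚ⟦X⟧ :=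
  mk fun n => (Nat.card (ForestsOfSize W n) : ℚ)

theorem forestGF_eq [∀ n, Finite (TreesOfSize R n)] [∀ n, Finite (ForestsOfSize R n)] :
    forestGF R = 1 + treeGF R * forestGF R := by
  ext n
  simp only [forestGF, treeGF, map_add, coeff_mul, coeff_mk, coeff_one, card_forestsOfSize n]
  push_cast
  rfl

theorem treeGF_eq_of_node (hW : ∀ a ts, W (node a ts) ↔ a ∈ s ∧ ∀ t ∈ ts, R t) :
    treeGF W = C (Nat.card s : ℚ) * X * forestGF R := by
  ext (_ | n)
  · simp [treeGF]
  · rw [mul_assoc, coeff_C_mul, coeff_succ_X_mul]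
    simp [treeGF, forestGF, Nat.card_congr (treesOfSizeSuccEquiv hW n)]

theorem treeGF_eq_add (Q : LTree → Prop) [∀ n, Finite (TreesOfSize W n)] :
    treeGF W = treeGF (fun t => W t ∧ Q t) + treeGF (fun t => W t ∧ ¬Q t) := by
  classical
  ext n
  let e (Q' : LTree → Prop) :
      {t : TreesOfSize W n // Q' t.1} ≃ TreesOfSize (fun t => W t ∧ Q' t) n :=
    (Equiv.subtypeSubtypeEquivSubtypeInter _ (fun t => Q' t)).trans
      (Equiv.subtypeEquivRight fun _ => and_assoc)
  simp only [treeGF, coeff_mk, map_add, ← Nat.card_congr (e Q), ← Nat.card_congr (e (¬Q ·)),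
    ← Nat.cast_add, ← Nat.card_sum,
    Nat.card_congr (Equiv.sumCompl fun t : TreesOfSize W n => Q t.1)]

end Counting

theorem isLambdaPlaneTree_node {L : ℕ → ℕ} {l a : ℕ} {ts : List LTree} :
    IsLambdaPlaneTree L l (node a ts) ↔
      a ∈ Set.Icc 1 l ∧ ∀ t ∈ ts, cellMem L a t.label ∧ IsLambdaPlaneTree L l t := by
  simp only [IsLambdaPlaneTree, labelsLe_node, valid_node]
  grind

instance finite_treesOfSize_isLambdaPlaneTree (L : ℕ → ℕ) (l n : ℕ) :
    Finite (TreesOfSize (IsLambdaPlaneTree L l) n) :=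
  TreesOfSize.finite_of_imp (fun _ h => h.1) n

instance finite_forestsOfSize_isLambdaPlaneTree (L : ℕ → ℕ) (l n : ℕ) :
    Finite (ForestsOfSize (IsLambdaPlaneTree L l) n) :=
  ForestsOfSize.finite_of_imp (fun _ h => h.1) n

end LTree

open LTree

theorem IsLambdaPlaneTree.label_mem {L : ℕ → ℕ} {l : ℕ} {t : LTree}
    (h : IsLambdaPlaneTree L l t) : t.label ∈ Set.Icc 1 l := by
  cases t
  exact (isLambdaPlaneTree_node.1 h).1

def fatHook (a1 a2 : ℕ) (i : ℕ) : ℕ :=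
  if 1 ≤ i ∧ i ≤ a1 then a1 + a2 else if i ≤ a1 + a2 then a1 else 0

namespace FatHook

variable (a1 a2 : ℕ)

theorem cellMem_iff {u v : ℕ} (hu : u ∈ Set.Icc 1 (a1 + a2)) (hv : v ∈ Set.Icc 1 (a1 + a2)) :
    cellMem (fatHook a1 a2) u v ↔ u ≤ a1 ∨ v ≤ a1 := by
  simp only [Set.mem_Icc] at hu hv
  unfold cellMem fatHook
  split_ifs <;> omega

abbrev IsTree : LTree → Prop := IsLambdaPlaneTree (fatHook a1 a2) (a1 + a2)

def IsSmallRoot (t : LTree) : Prop := IsTree a1 a2 t ∧ t.label ≤ a1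

def IsBigRoot (t : LTree) : Prop := IsTree a1 a2 t ∧ ¬t.label ≤ a1

instance (n : ℕ) : Finite (TreesOfSize (IsSmallRoot a1 a2) n) :=
  TreesOfSize.finite_of_imp (fun _ h => h.1) n

instance (n : ℕ) : Finite (ForestsOfSize (IsSmallRoot a1 a2) n) :=
  ForestsOfSize.finite_of_imp (fun _ h => h.1) n

theorem isSmallRoot_node (a : ℕ) (ts : List LTree) :
    IsSmallRoot a1 a2 (node a ts) ↔ a ∈ Set.Icc 1 a1 ∧ ∀ t ∈ ts, IsTree a1 a2 t := by
  simp only [IsSmallRoot, isLambdaPlaneTree_node, label_node, Set.mem_Icc]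
  constructor
  · rintro ⟨⟨⟨ha1, -⟩, hts⟩, ha⟩
    exact ⟨⟨ha1, ha⟩, fun t ht => (hts t ht).2⟩
  · rintro ⟨⟨ha1, ha⟩, hts⟩
    have hmem : a ∈ Set.Icc 1 (a1 + a2) := ⟨ha1, by omega⟩
    refine ⟨⟨⟨ha1, by omega⟩, fun t ht => ⟨?_, hts t ht⟩⟩, ha⟩
    exact (cellMem_iff a1 a2 hmem (hts t ht).label_mem).2 (.inl ha)

theorem isBigRoot_node (a : ℕ) (ts : List LTree) :
    IsBigRoot a1 a2 (node a ts) ↔ a ∈ Set.Ioc a1 (a1 + a2) ∧ ∀ t ∈ ts, IsSmallRoot a1 a2 t := by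
  simp only [IsBigRoot, IsSmallRoot, isLambdaPlaneTree_node, label_node, Set.mem_Icc, Set.mem_Ioc]
  constructor
  · rintro ⟨⟨⟨ha1, ha2⟩, hts⟩, ha⟩
    refine ⟨⟨by omega, ha2⟩, fun t ht => ⟨(hts t ht).2, ?_⟩⟩
    have := (cellMem_iff a1 a2 ⟨ha1, ha2⟩ (hts t ht).2.label_mem).1 (hts t ht).1
    omega
  · rintro ⟨⟨ha, ha2⟩, hts⟩
    have hmem : a ∈ Set.Icc 1 (a1 + a2) := ⟨by omega, ha2⟩
    refine ⟨⟨⟨by omega, ha2⟩, fun t ht => ⟨?_, (hts t ht).1⟩⟩, by omega⟩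
    exact (cellMem_iff a1 a2 hmem (hts t ht).1.label_mem).2 (.inr (hts t ht).2)

local notation "A" => treeGF (IsTree a1 a2)
local notation "S" => forestGF (IsTree a1 a2)
local notation "F" => treeGF (IsSmallRoot a1 a2)
local notation "G" => treeGF (IsBigRoot a1 a2)
local notation "S₁" => forestGF (IsSmallRoot a1 a2)

theorem treeGF_eq_smallRoot_add_bigRoot : A = F + G :=
  LTree.treeGF_eq_add (fun t => t.label ≤ a1)

theorem treeGF_smallRoot : F = C (a1 : ℚ) * X * S := by
  simpa using treeGF_eq_of_node (isSmallRoot_node a1 a2)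

theorem treeGF_bigRoot : G = C (a2 : ℚ) * X * S₁ := by
  simpa using treeGF_eq_of_node (isBigRoot_node a1 a2)

theorem treeGF_smallRoot_functional_eq : F = C (a1 : ℚ) * X * S₁ + C (a2 : ℚ) * X * F * S₁ ^ 2 := by
  have hS : S = 1 + A * S := forestGF_eq
  have hS₁ : S₁ = 1 + F * S₁ := forestGF_eq
  rw [treeGF_eq_smallRoot_add_bigRoot] at hS
  linear_combination (1 - G * S₁) * treeGF_smallRoot a1 a2 + F * S₁ * treeGF_bigRoot a1 a2 +
    C (a1 : ℚ) * X * S₁ * hS - C (a1 : ℚ) * X * S * hS₁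

end FatHook

/-- `N choose t` for integers, `0` unless `0 ≤ t ≤ N` (so not the generalized binomial coefficient
when `N < 0`). -/
noncomputable def zchoose (N t : ℤ) : ℚ :=
  if 0 ≤ t ∧ t ≤ N then (N.toNat.choose t.toNat : ℚ) else 0

@[simp] theorem zchoose_natCast (n k : ℕ) : zchoose n k = n.choose k := by
  unfold zchoose
  split_ifs with h
  · simp
  · rw [Nat.choose_eq_zero_of_lt (by omega), Nat.cast_zero]

theorem zchoose_zero_right {N : ℤ} (hN : 0 ≤ N) : zchoose N 0 = 1 := by
  simp [zchoose, hN]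

theorem zchoose_of_neg {N t : ℤ} (ht : t < 0) : zchoose N t = 0 := if_neg (by omega)

theorem zchoose_of_lt {N t : ℤ} (ht : N < t) : zchoose N t = 0 := if_neg (by omega)

theorem zchoose_add_one {N : ℤ} (hN : 0 ≤ N) (t : ℤ) :
    zchoose (N + 1) t = zchoose N t + zchoose N (t - 1) := by
  lift N to ℕ using hN
  rcases lt_or_ge t 0 with ht | ht
  · simp [zchoose_of_neg, ht, show t - 1 < 0 by omega]
  lift t to ℕ using ht
  rw [← Nat.cast_add_one, zchoose_natCast, zchoose_natCast]
  rcases t with _ | k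
  · simp [zchoose_of_neg]
  · rw [Nat.cast_add_one, add_sub_cancel_right, zchoose_natCast, Nat.choose_succ_succ',
      Nat.cast_add, add_comm]

theorem mul_zchoose (N t : ℤ) : t * zchoose N t = (N - t + 1) * zchoose N (t - 1) := by
  rcases lt_or_ge t 1 with ht | ht
  · obtain ht | rfl : t < 0 ∨ t = 0 := by omega
    · simp [zchoose_of_neg, ht, show t - 1 < 0 by omega]
    · simp [zchoose_of_neg]
  rcases lt_or_ge N t with hN | hN
  · obtain hN' | rfl : N < t - 1 ∨ N = t - 1 := by omega
    · simp [zchoose_of_lt, hN, hN']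
    · simp [zchoose_of_lt, hN]
  lift N to ℕ using by omega
  obtain ⟨k, rfl⟩ : ∃ k : ℕ, t = k + 1 := ⟨(t - 1).toNat, by omega⟩
  have hrec : (N.choose (k + 1) : ℚ) * (k + 1) = N.choose k * ((N : ℚ) - k) := by
    rw [← Nat.cast_sub (by omega)]
    exact_mod_cast Nat.choose_succ_right_eq N k
  rw [add_sub_cancel_right, ← Nat.cast_add_one, zchoose_natCast, zchoose_natCast]
  push_cast
  linear_combination hrec

/-- The coefficient of `x ^ (m - j) * y ^ j * X ^ m` in `F ^ p * S ^ q`, where `F = X S (x + y F S)`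
and `S = 1 + F S`; for `m ≠ 0` this is a Lagrange inversion formula. -/
noncomputable def fsTerm (p q m : ℕ) (j : ℤ) : ℚ :=
  if m = 0 then if p = 0 ∧ j = 0 then 1 else 0
  else zchoose m j * (p * zchoose (2 * m + q - p - 1) (m - j - p) +
    q * zchoose (2 * m + q - p - 1) (m - j - p - 1)) / m

-- `N` and `i` are free so that rewriting puts the `zchoose` arguments into a chosen normal form.
theorem fsTerm_of_ne_zero {p q m : ℕ} (hm : m ≠ 0) {j N i : ℤ} (hN : N = 2 * m + q - p - 1)
    (hi : i = m - j - p) :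
    fsTerm p q m j = zchoose m j * (p * zchoose N i + q * zchoose N (i - 1)) / m := by
  rw [fsTerm, if_neg hm, hN, hi]

theorem fsTerm_of_neg (p q m : ℕ) {j : ℤ} (hj : j < 0) : fsTerm p q m j = 0 := by
  unfold fsTerm
  split_ifs <;> simp_all [zchoose_of_neg]

theorem fsTerm_of_lt (p q m : ℕ) {j : ℤ} (hj : m < j) : fsTerm p q m j = 0 := by
  unfold fsTerm
  split_ifs <;> simp_all [zchoose_of_lt]

theorem fsTerm_zero_zero {m : ℕ} (hm : m ≠ 0) (j : ℤ) : fsTerm 0 0 m j = 0 := by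
  simp [fsTerm, hm]

theorem fsTerm_zero_right (p q : ℕ) (j : ℤ) : fsTerm p q 0 j = if p = 0 ∧ j = 0 then 1 else 0 := by
  simp [fsTerm]

theorem fsTerm_one (p q : ℕ) (j : ℤ) : fsTerm (p + 1) q 1 j = if p = 0 ∧ j = 0 then 1 else 0 := by
  rw [fsTerm_of_ne_zero one_ne_zero (N := q - p) (i := -j - p) (by push_cast; ring)
    (by push_cast; ring)]
  by_cases h : p = 0 ∧ j = 0
  · obtain ⟨rfl, rfl⟩ := h
    simp [zchoose_zero_right, zchoose_of_neg]
  rw [if_neg h]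
  obtain hj | hj | hi : j < 0 ∨ 1 < j ∨ -j - p < 0 := by omega
  · simp [zchoose_of_neg hj]
  · simp [zchoose_of_lt hj]
  · simp [zchoose_of_neg hi, zchoose_of_neg (show -j - p - 1 < 0 by omega)]

theorem fsTerm_succ_left (p q m : ℕ) (j : ℤ) :
    fsTerm (p + 1) q (m + 1) j = fsTerm p (q + 1) m j + fsTerm (p + 1) (q + 2) m (j - 1) := by
  rcases Nat.eq_zero_or_pos m with rfl | hm
  · rw [zero_add, fsTerm_one, fsTerm_zero_right, fsTerm_zero_right,
      if_neg (show ¬(p + 1 = 0 ∧ j - 1 = 0) by omega), add_zero]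
  have hm0 : (m : ℚ) ≠ 0 := by positivity
  rw [fsTerm_of_ne_zero (N := 2 * m + q - p) (i := m - j - p) (by omega) (by push_cast; ring)
      (by push_cast; ring),
    fsTerm_of_ne_zero (N := 2 * m + q - p) (i := m - j - p) (by omega) (by push_cast; ring) rfl,
    fsTerm_of_ne_zero (N := 2 * m + q - p) (i := m - j - p) (by omega) (by push_cast; ring)
      (by push_cast; ring),
    Nat.cast_succ, zchoose_add_one (by positivity)]
  have hc := mul_zchoose m j
  have hb := mul_zchoose (2 * m + q - p) (m - j - p)
  push_cast at hb ⊢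
  field_simp
  linear_combination
    (zchoose (2 * m + q - p) (m - j - p) + zchoose (2 * m + q - p) (m - j - p - 1)) * hc +
      (zchoose m j + zchoose m (j - 1)) * hb

theorem fsTerm_succ_right (q m : ℕ) (j : ℤ) :
    fsTerm 0 (q + 1) m j = fsTerm 0 q m j + fsTerm 1 (q + 1) m j := by
  rcases Nat.eq_zero_or_pos m with rfl | hm
  · simp [fsTerm_zero_right]
  rw [fsTerm_of_ne_zero (N := 2 * m + q - 1 + 1) (i := m - j) (by omega) (by push_cast; ring)
      (by push_cast; ring),
    fsTerm_of_ne_zero (N := 2 * m + q - 1) (i := m - j) (by omega) (by push_cast; ring)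
      (by push_cast; ring),
    fsTerm_of_ne_zero (N := 2 * m + q - 1) (i := m - j - 1) (by omega) (by push_cast; ring)
      (by push_cast; ring),
    zchoose_add_one (by omega) (m - j - 1)]
  push_cast
  ring

def homogSum (g : ℤ → ℚ) (x y : ℚ) (m : ℕ) : ℚ :=
  ∑ j ∈ range (m + 1), g j * x ^ (m - j) * y ^ j

theorem homogSum_add (g h : ℤ → ℚ) (x y : ℚ) (m : ℕ) :
    homogSum (g + h) x y m = homogSum g x y m + homogSum h x y m := by
  simp only [homogSum, Pi.add_apply, add_mul, sum_add_distrib]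

theorem homogSum_succ {g : ℤ → ℚ} {m : ℕ} (hg : g (m + 1) = 0) (x y : ℚ) :
    homogSum g x y (m + 1) = x * homogSum g x y m := by
  rw [homogSum, sum_range_succ, Nat.cast_succ, hg, zero_mul, zero_mul, add_zero, homogSum,
    mul_sum]
  refine sum_congr rfl fun j hj => ?_
  rw [Nat.sub_add_comm (mem_range_succ_iff.1 hj), pow_succ]
  ring

theorem homogSum_succ_shift {g : ℤ → ℚ} (hg : g (-1) = 0) (x y : ℚ) (m : ℕ) :
    homogSum (fun j => g (j - 1)) x y (m + 1) = y * homogSum g x y m := by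
  rw [homogSum, sum_range_succ', Nat.cast_zero, zero_sub, hg, zero_mul, zero_mul, add_zero,
    homogSum, mul_sum]
  refine sum_congr rfl fun j _ => ?_
  rw [Nat.cast_succ, add_sub_cancel_right, Nat.add_sub_add_right, pow_succ]
  ring

noncomputable def fsCoeff (x y : ℚ) (p q m : ℕ) : ℚ := homogSum (fsTerm p q m) x y m

theorem fsCoeff_zero (x y : ℚ) (p q : ℕ) : fsCoeff x y p q 0 = if p = 0 then 1 else 0 := by
  simp [fsCoeff, homogSum, fsTerm_zero_right]

theorem fsCoeff_zero_zero (x y : ℚ) {m : ℕ} (hm : m ≠ 0) : fsCoeff x y 0 0 m = 0 := by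
  simp [fsCoeff, homogSum, fsTerm_zero_zero hm]

theorem fsCoeff_succ_left (x y : ℚ) (p q m : ℕ) :
    fsCoeff x y (p + 1) q (m + 1) =
      x * fsCoeff x y p (q + 1) m + y * fsCoeff x y (p + 1) (q + 2) m := by
  have hsplit : fsTerm (p + 1) q (m + 1) =
      fsTerm p (q + 1) m + fun j => fsTerm (p + 1) (q + 2) m (j - 1) :=
    funext (fsTerm_succ_left p q m)
  rw [fsCoeff, hsplit, homogSum_add, homogSum_succ (fsTerm_of_lt _ _ _ (by omega)),
    homogSum_succ_shift (fsTerm_of_neg _ _ _ (by norm_num)), fsCoeff, fsCoeff]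

theorem fsCoeff_succ_right (x y : ℚ) (q m : ℕ) :
    fsCoeff x y 0 (q + 1) m = fsCoeff x y 0 q m + fsCoeff x y 1 (q + 1) m := by
  have hsplit : fsTerm 0 (q + 1) m = fsTerm 0 q m + fsTerm 1 (q + 1) m :=
    funext (fsTerm_succ_right q m)
  rw [fsCoeff, hsplit, homogSum_add, fsCoeff, fsCoeff]

theorem coeff_pow_mul_pow {x y : ℚ} {F S : ℚ⟦X⟧} (hF : F = C x * X * S + C y * X * F * S ^ 2)
    (hS : S = 1 + F * S) (m p q : ℕ) : coeff m (F ^ p * S ^ q) = fsCoeff x y p q m := by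
  induction m using Nat.strong_induction_on generalizing p q with
  | _ m ih =>
  have hsucc (p q : ℕ) : coeff m (F ^ (p + 1) * S ^ q) = fsCoeff x y (p + 1) q m := by
    have hexp : F ^ (p + 1) * S ^ q =
        C x * X * (F ^ p * S ^ (q + 1)) + C y * X * (F ^ (p + 1) * S ^ (q + 2)) := by
      linear_combination (F ^ p * S ^ q) * hF
    rw [hexp, map_add, mul_assoc, mul_assoc, coeff_C_mul, coeff_C_mul]
    rcases m with _ | m
    · simp [fsCoeff_zero]
    · rw [coeff_succ_X_mul, coeff_succ_X_mul, ih m m.lt_succ_self, ih m m.lt_succ_self,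
        fsCoeff_succ_left]
  rcases p with _ | p
  · induction q with
    | zero =>
      rw [pow_zero, pow_zero, mul_one, coeff_one]
      rcases m with _ | m
      · simp [fsCoeff_zero]
      · simp [fsCoeff_zero_zero]
    | succ q ihq =>
      have hexp : F ^ 0 * S ^ (q + 1) = F ^ 0 * S ^ q + F ^ 1 * S ^ (q + 1) := by
        linear_combination S ^ q * hS
      rw [hexp, map_add, ihq, hsucc, fsCoeff_succ_right]
  · exact hsucc p q

theorem fsTerm_one_zero_add_fsTerm_zero_one {k : ℕ} (hk : k ≠ 0) {j : ℕ} (hj : j ≤ k + 1) :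
    fsTerm 1 0 (k + 1) j + fsTerm 0 1 k (j - 1) =
      1 / (k : ℚ) * (Nat.choose (2 * k) (k + 1 - j) : ℚ) * (Nat.choose k j : ℚ) := by
  have hk0 : (k : ℚ) ≠ 0 := by positivity
  rw [fsTerm_of_ne_zero (N := 2 * k) (i := k - j) (by omega) (by push_cast; ring)
      (by push_cast; ring),
    fsTerm_of_ne_zero (N := 2 * k) (i := k - j + 1) hk (by push_cast; ring) (by push_cast; ring),
    Nat.cast_succ, zchoose_add_one (by positivity), add_sub_cancel_right,
    ← zchoose_natCast, ← zchoose_natCast, Nat.cast_sub hj]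
  have hc := mul_zchoose k j
  have hb := mul_zchoose (2 * k) (k - j + 1)
  rw [add_sub_cancel_right] at hb
  push_cast at hc hb ⊢
  rw [show (k : ℤ) + 1 - j = k - j + 1 by ring]
  have hkj : (k + j : ℚ) ≠ 0 := by positivity
  field_simp
  -- only after scaling by `k + j` can `hb` trade `C(2k, k - j)` for `C(2k, k - j + 1)`
  apply mul_left_cancel₀ hkj
  linear_combination (-(k * zchoose k j + (2 * k + 1) * zchoose k (j - 1))) * hb -
    (2 * k + 1) * zchoose (2 * k) (k - j + 1) * hc

theorem stmt9_general (a1 a2 : ℕ) (k : ℕ) (hk : 1 ≤ k)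
    (L : ℕ → ℕ)
    (hL : ∀ i, L i = if 1 ≤ i ∧ i ≤ a1 then a1 + a2 else if i ≤ a1 + a2 then a1 else 0) :
    (lambdaPlaneCount L (a1 + a2) k : ℚ) =
      ∑ j ∈ Finset.range (k + 2),
        (1 / (k : ℚ)) * (Nat.choose (2 * k) (k + 1 - j) : ℚ) * (Nat.choose k j : ℚ) *
          (a1 : ℚ) ^ (k + 1 - j) * (a2 : ℚ) ^ j := by
  obtain rfl : L = fatHook a1 a2 := funext hL
  have hcoeff := coeff_pow_mul_pow (FatHook.treeGF_smallRoot_functional_eq a1 a2) forestGF_eq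
  have hF := hcoeff (k + 1) 1 0
  have hS := hcoeff k 0 1
  rw [pow_one, pow_zero, mul_one] at hF
  rw [pow_zero, one_mul, pow_one] at hS
  calc (lambdaPlaneCount (fatHook a1 a2) (a1 + a2) k : ℚ)
      = coeff (k + 1) (treeGF (FatHook.IsTree a1 a2)) := by simp [lambdaPlaneCount, treeGF]
    _ = fsCoeff a1 a2 1 0 (k + 1) + a2 * fsCoeff a1 a2 0 1 k := by
      rw [FatHook.treeGF_eq_smallRoot_add_bigRoot, map_add, FatHook.treeGF_bigRoot, mul_assoc,
        coeff_C_mul, coeff_succ_X_mul, hF, hS]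
    _ = _ := by
      rw [fsCoeff, fsCoeff, ← homogSum_succ_shift (fsTerm_of_neg _ _ _ (by norm_num)),
        ← homogSum_add, homogSum]
      refine sum_congr rfl fun j hj => ?_
      rw [Pi.add_apply, fsTerm_one_zero_add_fsTerm_zero_one (by omega)
        (mem_range_succ_iff.1 hj)]

/-- For the fat hook `λ = ((a₁+a₂)^{a₁}, a₁^{a₂})`, for `k ≥ 1`,
`C_k^λ = Σ_{j=0}^{k+1} (1/k) · binom(2k, k+1-j) · binom(k, j) · a₁^{k+1-j} a₂^j`. -/
theorem stmt9 (a1 a2 : ℕ) (h1 : 1 ≤ a1) (h2 : 1 ≤ a2) (k : ℕ) (hk : 1 ≤ k)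
    (L : ℕ → ℕ)
    (hL : ∀ i, L i = if 1 ≤ i ∧ i ≤ a1 then a1 + a2 else if i ≤ a1 + a2 then a1 else 0) :
    (lambdaPlaneCount L (a1 + a2) k : ℚ) =
      ∑ j ∈ Finset.range (k + 2),
        (1 / (k : ℚ)) * (Nat.choose (2 * k) (k + 1 - j) : ℚ) * (Nat.choose k j : ℚ) *
          (a1 : ℚ) ^ (k + 1 - j) * (a2 : ℚ) ^ j :=
  stmt9_general a1 a2 k hk L hL
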